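/- Let S be the unilateral shift on ℓ²(ℕ₀) (S e_n = e_{n+1}), let S₁ be the binary shift on ℓ²(T) defined by S₁ e_x = e_{x0} + e_{x1} (the sum of the basis vectors at the two children of x), and let W : ℓ²(ℕ₀) → ℓ²(T) be the linear map with W e_n = 2^{−n/2} Σ_{x:|x|=n} e_x. Then: (i) W is an isometry; (ii) H₀ = S₁ + S₁*; (iii) S₁ W = √2 · W S; (iv) W* S₁* = √2 · S* W*; (v) W* S₁ = √2 · S W*; and (vi) S₁* W = √2 · W S*. -/

import Mathlib

/-!
`W` sends `e_n` to the normalised indicator of the `n`-th sphere of the tree; spheres of different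
radii are disjoint and the `n`-th has `2^n` points, so `W` maps the orthonormal basis of `ℓ²(ℕ₀)`
to an orthonormal family. `S₁` maps the indicator of the `n`-th sphere to that of the `(n+1)`-th,
while `S₁*` sends `e_x` to the basis vector at the parent of `x` and hence maps it to twice that
of the `(n-1)`-th; comparing the normalisations gives the factors `√2` in (iii) and (vi), and
(iv), (v) are their adjoints. In coordinates, `(S₁ f)(x)` is `f` at the parent of `x` and
`(S₁* f)(x)` is the sum of `f` over the children, which is (ii).
-/

open MeasureTheory Filter ContinuousLinearMap

noncomputable section

abbrev l2T : Type := lp (fun _ : List Bool => ℂ) 2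
abbrev l2N : Type := lp (fun _ : ℕ => ℂ) 2

def eT (x : List Bool) : l2T := lp.single 2 x 1
def eN (n : ℕ) : l2N := lp.single 2 n 1

def parentVal (f : List Bool → ℂ) (x : List Bool) : ℂ :=
  match x with
  | [] => 0
  | _ :: t => f t

def IsSchrodingerOp (V : List Bool → ℝ) (H : l2T →L[ℂ] l2T) : Prop :=
  ∀ f : l2T, ∀ x : List Bool,
    (H f : ∀ _ : List Bool, ℂ) x =
      parentVal (fun y => f y) x + f (false :: x) + f (true :: x) + (V x : ℂ) * f x

def IsFreeLaplacian (H : l2T →L[ℂ] l2T) : Prop := IsSchrodingerOp (fun _ => 0) H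

/-- The sphere `{x : |x| = n}` of the binary tree, as a `Finset`. -/
def sphereF (n : ℕ) : Finset (List Bool) :=
  Finset.image (fun f : Fin n → Bool => List.ofFn f) Finset.univ

open scoped InnerProductSpace
open Finset

theorem adjoint_ofReal_smul {E F : Type*} [NormedAddCommGroup E] [NormedAddCommGroup F]
    [InnerProductSpace ℂ E] [InnerProductSpace ℂ F] [CompleteSpace E] [CompleteSpace F]
    (r : ℝ) (A : E →L[ℂ] F) : adjoint ((r : ℂ) • A) = (r : ℂ) • adjoint A := by
  rw [map_smulₛₗ, Complex.conj_ofReal]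

namespace lp

variable {𝕜 ι : Type*} [RCLike 𝕜] [DecidableEq ι]

theorem ext_continuousLinearMap_single {F : Type*} [AddCommMonoid F] [Module 𝕜 F]
    [TopologicalSpace F] [T2Space F] {T T' : lp (fun _ : ι => 𝕜) 2 →L[𝕜] F}
    (h : ∀ i, T (lp.single 2 i 1) = T' (lp.single 2 i 1)) : T = T' :=
  lp.ext_continuousLinearMap (by norm_num) fun i => ContinuousLinearMap.ext_ring (h i)

theorem inner_single_one_left (i : ι) (f : lp (fun _ : ι => 𝕜) 2) :
    ⟪lp.single 2 i (1 : 𝕜), f⟫_𝕜 = f i := by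
  simp [lp.inner_single_left]

theorem adjoint_apply {F : Type*} [NormedAddCommGroup F] [InnerProductSpace 𝕜 F] [CompleteSpace F]
    (A : lp (fun _ : ι => 𝕜) 2 →L[𝕜] F) (f : F) (i : ι) :
    (ContinuousLinearMap.adjoint A f : ι → 𝕜) i = ⟪A (lp.single 2 i 1), f⟫_𝕜 := by
  rw [← inner_single_one_left, ContinuousLinearMap.adjoint_inner_right]

theorem apply_eq_inner_adjoint {E : Type*} [NormedAddCommGroup E] [InnerProductSpace 𝕜 E]
    [CompleteSpace E] (A : E →L[𝕜] lp (fun _ : ι => 𝕜) 2) (f : E) (i : ι) :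
    (A f : ι → 𝕜) i = ⟪ContinuousLinearMap.adjoint A (lp.single 2 i 1), f⟫_𝕜 := by
  rw [← inner_single_one_left, ContinuousLinearMap.adjoint_inner_left]

theorem inner_sum_single_sum_single (s t : Finset ι) :
    ⟪∑ x ∈ s, lp.single 2 x (1 : 𝕜), ∑ y ∈ t, lp.single 2 y (1 : 𝕜)⟫_𝕜 = #(s ∩ t) := by
  have hcoord (x : ι) : ((∑ y ∈ t, lp.single 2 y (1 : 𝕜) : lp (fun _ : ι => 𝕜) 2) : ι → 𝕜) x =
      if x ∈ t then 1 else 0 := by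
    rw [lp.coeFn_sum, Finset.sum_apply]
    simp [lp.single_apply, Pi.single_apply]
  simp only [sum_inner, inner_single_one_left, hcoord]
  simp

end lp

theorem eT_apply (y x : List Bool) : (eT y : List Bool → ℂ) x = if x = y then 1 else 0 := by
  simp [eT, lp.single_apply, Pi.single_apply]

theorem eN_apply (m k : ℕ) : (eN m : ℕ → ℂ) k = if k = m then 1 else 0 := by
  simp [eN, lp.single_apply, Pi.single_apply]

theorem ext_eN {F : Type*} [AddCommMonoid F] [Module ℂ F] [TopologicalSpace F] [T2Space F]
    {T T' : l2N →L[ℂ] F} (h : ∀ n, T (eN n) = T' (eN n)) : T = T' :=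
  lp.ext_continuousLinearMap_single h

theorem mem_sphereF {n : ℕ} {x : List Bool} : x ∈ sphereF n ↔ x.length = n := by
  simp only [sphereF, Finset.mem_image, Finset.mem_univ, true_and]
  constructor
  · rintro ⟨f, rfl⟩
    exact List.length_ofFn
  · rintro rfl
    exact ⟨x.get, List.ofFn_get x⟩

theorem card_sphereF (n : ℕ) : #(sphereF n) = 2 ^ n := by
  rw [sphereF, Finset.card_image_of_injective _ List.ofFn_injective]
  simp

theorem sphereF_zero : sphereF 0 = {[]} := by
  ext x
  simp [mem_sphereF]

theorem disjoint_sphereF {k m : ℕ} (h : k ≠ m) : Disjoint (sphereF k) (sphereF m) :=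
  Finset.disjoint_left.mpr fun _ hk hm => h ((mem_sphereF.mp hk).symm.trans (mem_sphereF.mp hm))

theorem sphereF_succ (n : ℕ) :
    sphereF (n + 1) = (univ ×ˢ sphereF n).image fun p : Bool × List Bool => p.1 :: p.2 := by
  ext x
  cases x <;> simp [mem_sphereF]

theorem sum_sphereF_succ {M : Type*} [AddCommMonoid M] (n : ℕ) (g : List Bool → M) :
    ∑ x ∈ sphereF (n + 1), g x = ∑ x ∈ sphereF n, (g (false :: x) + g (true :: x)) := by
  rw [sphereF_succ, Finset.sum_image (by simp), Finset.sum_product, Fintype.sum_bool,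
    ← Finset.sum_add_distrib]
  exact Finset.sum_congr rfl fun _ _ => add_comm _ _

theorem eT_inner (x : List Bool) (f : l2T) : ⟪eT x, f⟫_ℂ = f x := lp.inner_single_one_left x f

def parentE : List Bool → l2T
  | [] => 0
  | _ :: t => eT t

theorem inner_parentE (x : List Bool) (f : l2T) : ⟪parentE x, f⟫_ℂ = parentVal (fun y => f y) x := by
  cases x <;> simp [parentE, parentVal, eT_inner]

section BinaryShift

variable {S₁ : l2T →L[ℂ] l2T} (hS₁ : ∀ x : List Bool, S₁ (eT x) = eT (false :: x) + eT (true :: x))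
include hS₁

theorem adjoint_binaryShift_apply (f : l2T) (y : List Bool) :
    (adjoint S₁ f : List Bool → ℂ) y = f (false :: y) + f (true :: y) :=
  calc _ = ⟪S₁ (eT y), f⟫_ℂ := lp.adjoint_apply S₁ f y
    _ = _ := by rw [hS₁, inner_add_left, eT_inner, eT_inner]

theorem adjoint_binaryShift_eT (x : List Bool) : adjoint S₁ (eT x) = parentE x := by
  ext y
  rw [adjoint_binaryShift_apply hS₁, eT_apply, eT_apply]
  cases x with
  | nil => simp [parentE]
  | cons b t => cases b <;> simp [parentE, eT_apply]

theorem binaryShift_apply (f : l2T) (y : List Bool) :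
    (S₁ f : List Bool → ℂ) y = parentVal (fun z => f z) y := by
  rw [lp.apply_eq_inner_adjoint]
  exact (adjoint_binaryShift_eT hS₁ y) ▸ inner_parentE y f

theorem eq_binaryShift_add_adjoint_of_isFreeLaplacian {H₀ : l2T →L[ℂ] l2T}
    (hH₀ : IsFreeLaplacian H₀) : H₀ = S₁ + adjoint S₁ := by
  ext f x
  rw [hH₀ f x, add_apply, lp.coeFn_add, Pi.add_apply,
    binaryShift_apply hS₁, adjoint_binaryShift_apply hS₁]
  simp [add_assoc]

theorem binaryShift_sum_sphereF (n : ℕ) :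
    S₁ (∑ x ∈ sphereF n, eT x) = ∑ x ∈ sphereF (n + 1), eT x := by
  rw [map_sum, sum_sphereF_succ]
  exact Finset.sum_congr rfl fun x _ => hS₁ x

theorem adjoint_binaryShift_sum_sphereF_zero : adjoint S₁ (∑ x ∈ sphereF 0, eT x) = 0 := by
  simp [sphereF_zero, adjoint_binaryShift_eT hS₁, parentE]

theorem adjoint_binaryShift_sum_sphereF_succ (n : ℕ) :
    adjoint S₁ (∑ x ∈ sphereF (n + 1), eT x) = (2 : ℂ) • ∑ x ∈ sphereF n, eT x := by
  rw [sum_sphereF_succ, map_sum, Finset.smul_sum]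
  simp only [map_add, adjoint_binaryShift_eT hS₁, parentE, two_smul]

end BinaryShift

section UnilateralShift

variable {S : l2N →L[ℂ] l2N} (hS : ∀ n : ℕ, S (eN n) = eN (n + 1))
include hS

theorem adjoint_unilateralShift_apply (f : l2N) (m : ℕ) : (adjoint S f : ℕ → ℂ) m = f (m + 1) :=
  calc _ = ⟪S (eN m), f⟫_ℂ := lp.adjoint_apply S f m
    _ = _ := by rw [hS]; exact lp.inner_single_one_left _ f

theorem adjoint_unilateralShift_eN_zero : adjoint S (eN 0) = 0 := by
  ext m
  simp [adjoint_unilateralShift_apply hS, eN_apply]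

theorem adjoint_unilateralShift_eN_succ (n : ℕ) : adjoint S (eN (n + 1)) = eN n := by
  ext m
  simp [adjoint_unilateralShift_apply hS, eN_apply]

end UnilateralShift

theorem ofReal_sqrt_two_ne_zero : (Real.sqrt 2 : ℂ) ≠ 0 := by
  exact_mod_cast (Real.sqrt_pos.mpr two_pos).ne'

theorem ofReal_sqrt_two_mul_self : (Real.sqrt 2 : ℂ) * Real.sqrt 2 = 2 := by
  exact_mod_cast Real.mul_self_sqrt zero_le_two

theorem sqrt_two_mul_inv_sqrt_two_pow_succ (n : ℕ) :
    (Real.sqrt 2 : ℂ) * ((Real.sqrt 2 : ℂ))⁻¹ ^ (n + 1) = ((Real.sqrt 2 : ℂ))⁻¹ ^ n := by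
  rw [pow_succ', ← mul_assoc, mul_inv_cancel₀ ofReal_sqrt_two_ne_zero, one_mul]

section SphericalEmbedding

variable {W : l2N →L[ℂ] l2T}
  (hW : ∀ n : ℕ, W (eN n) = ((Real.sqrt 2 : ℂ))⁻¹ ^ n • ∑ x ∈ sphereF n, eT x)
include hW

theorem inner_sphericalEmbedding_eN (k m : ℕ) :
    ⟪W (eN k), W (eN m)⟫_ℂ = if k = m then 1 else 0 := by
  rw [hW, hW, inner_smul_left, inner_smul_right]
  simp only [eT, lp.inner_sum_single_sum_single]
  split_ifs with hkm
  · subst hkm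
    rw [Finset.inter_self, card_sphereF, map_pow, map_inv₀, Complex.conj_ofReal, ← mul_assoc,
      ← mul_pow, ← mul_inv, ofReal_sqrt_two_mul_self]
    push_cast
    rw [← mul_pow, inv_mul_cancel₀ two_ne_zero, one_pow]
  · rw [Finset.disjoint_iff_inter_eq_empty.mp (disjoint_sphereF hkm)]
    simp

theorem isometry_sphericalEmbedding : Isometry W := by
  rw [isometry_iff_adjoint_comp_self]
  refine ext_eN fun m => ?_
  ext k
  rw [comp_apply, lp.adjoint_apply, one_apply_eq_self]
  exact (inner_sphericalEmbedding_eN hW k m).trans (eN_apply m k).symm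

theorem binaryShift_comp_sphericalEmbedding {S₁ : l2T →L[ℂ] l2T}
    (hS₁ : ∀ x : List Bool, S₁ (eT x) = eT (false :: x) + eT (true :: x))
    {S : l2N →L[ℂ] l2N} (hS : ∀ n : ℕ, S (eN n) = eN (n + 1)) :
    S₁ ∘L W = (Real.sqrt 2 : ℂ) • (W ∘L S) := by
  refine ext_eN fun n => ?_
  rw [comp_apply, smul_apply, comp_apply, hS, hW, hW, map_smul, binaryShift_sum_sphereF hS₁,
    smul_smul, sqrt_two_mul_inv_sqrt_two_pow_succ]

theorem adjoint_binaryShift_comp_sphericalEmbedding {S₁ : l2T →L[ℂ] l2T}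
    (hS₁ : ∀ x : List Bool, S₁ (eT x) = eT (false :: x) + eT (true :: x))
    {S : l2N →L[ℂ] l2N} (hS : ∀ n : ℕ, S (eN n) = eN (n + 1)) :
    adjoint S₁ ∘L W = (Real.sqrt 2 : ℂ) • (W ∘L adjoint S) := by
  refine ext_eN fun n => ?_
  rw [comp_apply, smul_apply, comp_apply]
  cases n with
  | zero =>
    rw [adjoint_unilateralShift_eN_zero hS, map_zero, smul_zero, hW, map_smul,
      adjoint_binaryShift_sum_sphereF_zero hS₁, smul_zero]
  | succ n =>
    rw [adjoint_unilateralShift_eN_succ hS, hW, hW, map_smul,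
      adjoint_binaryShift_sum_sphereF_succ hS₁, smul_smul, smul_smul]
    congr 1
    rw [← ofReal_sqrt_two_mul_self, pow_succ]
    field_simp

end SphericalEmbedding

theorem stmt16
    (S : l2N →L[ℂ] l2N) (hS : ∀ n : ℕ, S (eN n) = eN (n + 1))
    (S₁ : l2T →L[ℂ] l2T)
    (hS₁ : ∀ x : List Bool, S₁ (eT x) = eT (false :: x) + eT (true :: x))
    (W : l2N →L[ℂ] l2T)
    (hW : ∀ n : ℕ, W (eN n) = ((Real.sqrt 2 : ℂ))⁻¹ ^ n • ∑ x ∈ sphereF n, eT x)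
    (H₀ : l2T →L[ℂ] l2T) (hH₀ : IsFreeLaplacian H₀) :
    Isometry W ∧
    H₀ = S₁ + adjoint S₁ ∧
    S₁ ∘L W = (Real.sqrt 2 : ℂ) • (W ∘L S) ∧
    adjoint W ∘L adjoint S₁ = (Real.sqrt 2 : ℂ) • (adjoint S ∘L adjoint W) ∧
    adjoint W ∘L S₁ = (Real.sqrt 2 : ℂ) • (S ∘L adjoint W) ∧
    adjoint S₁ ∘L W = (Real.sqrt 2 : ℂ) • (W ∘L adjoint S) := by
  have hiii := binaryShift_comp_sphericalEmbedding hW hS₁ hS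
  have hvi := adjoint_binaryShift_comp_sphericalEmbedding hW hS₁ hS
  refine ⟨isometry_sphericalEmbedding hW, eq_binaryShift_add_adjoint_of_isFreeLaplacian hS₁ hH₀,
    hiii, ?_, ?_, hvi⟩
  · rw [← adjoint_comp, hiii, adjoint_ofReal_smul, adjoint_comp]
  · simpa only [adjoint_comp, adjoint_adjoint, adjoint_ofReal_smul] using congrArg adjoint hvi
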